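/- The Jaccard distance d(S,T) = 1 − |S ∩ T|/|S ∪ T| (with d(S,T) = 0 when both sets are empty) defines a metric on the collection of finite subsets of a given type: it is nonnegative, zero exactly when S = T, symmetric, and satisfies the triangle inequality d(S,U) ≤ d(S,T) + d(T,U). -/

import Mathlib

/-- The Jaccard distance between two finite sets: `1 − |S ∩ T|/|S ∪ T|`,
with the convention that the distance between two empty sets is `0`. -/
noncomputable def jaccardDist {α : Type*} [DecidableEq α] (S T : Finset α) : ℝ :=
  if S ∪ T = ∅ then 0 else 1 - ((S ∩ T).card : ℝ) / ((S ∪ T).card : ℝ)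

private lemma jaccardDist_nonneg' {α : Type*} [DecidableEq α] (S T : Finset α) :
    0 ≤ jaccardDist S T := by
  unfold jaccardDist
  split
  · exact le_refl 0
  · rename_i h
    have hpos : 0 < ((S ∪ T).card : ℝ) := by
      exact_mod_cast Finset.card_pos.mpr (Finset.nonempty_of_ne_empty h)
    have hle : ((S ∩ T).card : ℝ) ≤ ((S ∪ T).card : ℝ) := by
      exact_mod_cast Finset.card_le_card (Finset.inter_subset_union)
    have := (div_le_one hpos).mpr hle
    linarith

private lemma jaccard_tri_real (a b c d e f g : ℝ) (ha : 0 ≤ a) (hb : 0 ≤ b) (hc : 0 ≤ c)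
    (hd : 0 ≤ d) (he : 0 ≤ e) (hf : 0 ≤ f) (hg : 0 ≤ g)
    (h1 : 0 < a + c + d + e + f + g) (h2 : 0 < a + b + d + e + f + g)
    (h3 : 0 < b + c + d + e + f + g) :
    1 - (e + g) / (a + c + d + e + f + g) ≤
      1 - (d + g) / (a + b + d + e + f + g) + (1 - (f + g) / (b + c + d + e + f + g)) := by
  have key : (0:ℝ) ≤ a * a * b + a * a * c + a * a * d + a * a * e + a * b * b + 2 * a * b * c + 2 * a * b * d + 4 * a * b * e + 2 * a * b * f + 2 * a * b * g + a * c * c + 2 * a * c * d + 4 * a * c * e + 2 * a * c * f + 2 * a * c * g + a * d * d + 4 * a * d * e + a * d * f + a * d * g + 3 * a * e * e + 3 * a * e * f + 3 * a * e * g + b * b * c + b * b * d + 2 * b * b * e + b * b * f + 2 * b * b * g + b * c * c + 2 * b * c * d + 4 * b * c * e + 2 * b * c * f + 2 * b * c * g + b * d * d + 5 * b * d * e + 2 * b * d * f + 3 * b * d * g + 4 * b * e * e + 5 * b * e * f + 6 * b * e * g + b * f * f + 3 * b * f * g + 2 * b * g * g + c * c * e + c * c * f + 3 * c * d * e + c *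 d * f + 3 * c * e * e + 4 * c * e * f + 3 * c * e * g + c * f * f + c * f * g + 2 * d * d * e + 4 * d * e * e + 4 * d * e * f + 4 * d * e * g + 2 * e * e * e + 4 * e * e * f + 4 * e * e * g + 2 * e * f * f + 4 * e * f * g + 2 * e * g * g := by
    have c2 : (0:ℝ) ≤ 2 := by norm_num
    have c3 : (0:ℝ) ≤ 3 := by norm_num
    have c4 : (0:ℝ) ≤ 4 := by norm_num
    have c5 : (0:ℝ) ≤ 5 := by norm_num
    have c6 : (0:ℝ) ≤ 6 := by norm_num
    have ha' := ha
    have hb' := hb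
    have hc' := hc
    have hd' := hd
    have he' := he
    have hf' := hf
    have hg' := hg
    exact (add_nonneg (add_nonneg (add_nonneg (add_nonneg (add_nonneg (add_nonneg (add_nonneg (add_nonneg (add_nonneg (add_nonneg (add_nonneg (add_nonneg (add_nonneg (add_nonneg (add_nonneg (add_nonneg (add_nonneg (add_nonneg (add_nonneg (add_nonneg (add_nonneg (add_nonneg (add_nonneg (add_nonneg (add_nonneg (add_nonneg (add_nonneg (add_nonneg (add_nonneg (add_nonneg (add_nonneg (add_nonneg (add_nonneg (add_nonneg (add_nonneg (add_nonneg (add_nonneg (add_nonneg (add_nonneg (add_nonneg (add_nonneg (add_nonneg (add_nonneg (add_nonneg (add_nonneg (add_nonneg (add_nonneg (add_nonneg (add_nonneg (add_nonneg (add_nonneg (add_nonneg (add_nonneg (add_nonneg (add_nonneg (add_nonneg (add_nonneg (add_nonneg (add_nonneg (add_nonneg (mul_nonneg (mul_nonneg ha' ha') hb') (mul_nonneg (mul_nonneg ha' ha') hc')) (mul_nonneg (mul_nonneg ha' ha') hd')) (mul_nonneg (mul_nonneg ha' ha') he')) (mul_nonneg (mul_nonneg ha' hb') hb')) (mul_nonneg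 (mul_nonneg (mul_nonneg c2 ha') hb') hc')) (mul_nonneg (mul_nonneg (mul_nonneg c2 ha') hb') hd')) (mul_nonneg (mul_nonneg (mul_nonneg c4 ha') hb') he')) (mul_nonneg (mul_nonneg (mul_nonneg c2 ha') hb') hf')) (mul_nonneg (mul_nonneg (mul_nonneg c2 ha') hb') hg')) (mul_nonneg (mul_nonneg ha' hc') hc')) (mul_nonneg (mul_nonneg (mul_nonneg c2 ha') hc') hd')) (mul_nonneg (mul_nonneg (mul_nonneg c4 ha') hc') he')) (mul_nonneg (mul_nonneg (mul_nonneg c2 ha') hc') hf')) (mul_nonneg (mul_nonneg (mul_nonneg c2 ha') hc') hg')) (mul_nonneg (mul_nonneg ha' hd') hd')) (mul_nonneg (mul_nonneg (mul_nonneg c4 ha') hd') he')) (mul_nonneg (mul_nonneg ha' hd') hf')) (mul_nonneg (mul_nonneg ha' hd') hg')) (mul_nonneg (mul_nonneg (mul_nonneg c3 ha') he') he')) (mul_nonneg (mul_nonneg (mul_nonneg c3 ha') he') hf')) (mul_nonneg (mul_nonneg (mul_nonneg c3 ha') he') hg')) (mul_nonneg (mul_nonneg hb' hb') hc')) (mul_nonneg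 (mul_nonneg hb' hb') hd')) (mul_nonneg (mul_nonneg (mul_nonneg c2 hb') hb') he')) (mul_nonneg (mul_nonneg hb' hb') hf')) (mul_nonneg (mul_nonneg (mul_nonneg c2 hb') hb') hg')) (mul_nonneg (mul_nonneg hb' hc') hc')) (mul_nonneg (mul_nonneg (mul_nonneg c2 hb') hc') hd')) (mul_nonneg (mul_nonneg (mul_nonneg c4 hb') hc') he')) (mul_nonneg (mul_nonneg (mul_nonneg c2 hb') hc') hf')) (mul_nonneg (mul_nonneg (mul_nonneg c2 hb') hc') hg')) (mul_nonneg (mul_nonneg hb' hd') hd')) (mul_nonneg (mul_nonneg (mul_nonneg c5 hb') hd') he')) (mul_nonneg (mul_nonneg (mul_nonneg c2 hb') hd') hf')) (mul_nonneg (mul_nonneg (mul_nonneg c3 hb') hd') hg')) (mul_nonneg (mul_nonneg (mul_nonneg c4 hb') he') he')) (mul_nonneg (mul_nonneg (mul_nonneg c5 hb') he') hf')) (mul_nonneg (mul_nonneg (mul_nonneg c6 hb') he') hg')) (mul_nonneg (mul_nonneg hb' hf') hf')) (mul_nonneg (mul_nonneg (mul_nonneg c3 hb') hf') hg')) (mul_nonneg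 (mul_nonneg (mul_nonneg c2 hb') hg') hg')) (mul_nonneg (mul_nonneg hc' hc') he')) (mul_nonneg (mul_nonneg hc' hc') hf')) (mul_nonneg (mul_nonneg (mul_nonneg c3 hc') hd') he')) (mul_nonneg (mul_nonneg hc' hd') hf')) (mul_nonneg (mul_nonneg (mul_nonneg c3 hc') he') he')) (mul_nonneg (mul_nonneg (mul_nonneg c4 hc') he') hf')) (mul_nonneg (mul_nonneg (mul_nonneg c3 hc') he') hg')) (mul_nonneg (mul_nonneg hc' hf') hf')) (mul_nonneg (mul_nonneg hc' hf') hg')) (mul_nonneg (mul_nonneg (mul_nonneg c2 hd') hd') he')) (mul_nonneg (mul_nonneg (mul_nonneg c4 hd') he') he')) (mul_nonneg (mul_nonneg (mul_nonneg c4 hd') he') hf')) (mul_nonneg (mul_nonneg (mul_nonneg c4 hd') he') hg')) (mul_nonneg (mul_nonneg (mul_nonneg c2 he') he') he')) (mul_nonneg (mul_nonneg (mul_nonneg c4 he') he') hf')) (mul_nonneg (mul_nonneg (mul_nonneg c4 he') he') hg')) (mul_nonneg (mul_nonneg (mul_nonneg c2 he') hf') hf')) (mul_nonneg (mul_nonneg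 (mul_nonneg c4 he') hf') hg')) (mul_nonneg (mul_nonneg (mul_nonneg c2 he') hg') hg'))
  have e1 : 1 - (e + g) / (a + c + d + e + f + g) = (a + c + d + f) / (a + c + d + e + f + g) := by
    field_simp
    ring
  have e2 : 1 - (d + g) / (a + b + d + e + f + g) = (a + b + e + f) / (a + b + d + e + f + g) := by
    field_simp
    ring
  have e3 : 1 - (f + g) / (b + c + d + e + f + g) = (b + c + d + e) / (b + c + d + e + f + g) := by
    field_simp
    ring
  rw [e1, e2, e3, div_add_div _ _ h2.ne' h3.ne', div_le_div_iff₀ h1 (mul_pos h2 h3)]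
  nlinarith [key]

private lemma jaccard_regions {α : Type*} [DecidableEq α] (S T U : Finset α) :
    (S ∩ T).card = ((S ∩ T) \ U).card + (S ∩ T ∩ U).card ∧
    (S ∪ T).card = (S \ (T ∪ U)).card + (T \ (S ∪ U)).card + ((S ∩ T) \ U).card +
      ((S ∩ U) \ T).card + ((T ∩ U) \ S).card + (S ∩ T ∩ U).card := by
  set a := (S \ (T ∪ U)).card
  set b := (T \ (S ∪ U)).card
  set d := ((S ∩ T) \ U).card
  set e := ((S ∩ U) \ T).card
  set f := ((T ∩ U) \ S).card
  set g := (S ∩ T ∩ U).card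
  have hst : (S ∩ T).card = d + g := by
    have h1 : (S ∩ T ∩ U).card + ((S ∩ T) \ U).card = (S ∩ T).card :=
      Finset.card_inter_add_card_sdiff (S ∩ T) U
    omega
  have hsu : (S ∩ U).card = e + g := by
    have h1 : (S ∩ U ∩ T).card + ((S ∩ U) \ T).card = (S ∩ U).card :=
      Finset.card_inter_add_card_sdiff (S ∩ U) T
    have h2 : S ∩ U ∩ T = S ∩ T ∩ U := by
      ext x; simp only [Finset.mem_inter]; tauto
    rw [h2] at h1
    omega
  have htu : (T ∩ U).card = f + g := by
    have h1 : (T ∩ U ∩ S).card + ((T ∩ U) \ S).card = (T ∩ U).card :=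
      Finset.card_inter_add_card_sdiff (T ∩ U) S
    have h2 : T ∩ U ∩ S = S ∩ T ∩ U := by
      ext x; simp only [Finset.mem_inter]; tauto
    rw [h2] at h1
    omega
  have hS : S.card = a + d + e + g := by
    have h1 : (S ∩ (T ∪ U)).card + (S \ (T ∪ U)).card = S.card :=
      Finset.card_inter_add_card_sdiff S (T ∪ U)
    have h2 : S ∩ (T ∪ U) = (S ∩ T) ∪ (S ∩ U) := Finset.inter_union_distrib_left S T U
    have h3 : ((S ∩ T) ∪ (S ∩ U)).card + ((S ∩ T) ∩ (S ∩ U)).card = (S ∩ T).card + (S ∩ U).card :=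
      Finset.card_union_add_card_inter _ _
    have h4 : (S ∩ T) ∩ (S ∩ U) = S ∩ T ∩ U := by
      ext x; simp only [Finset.mem_inter]; tauto
    rw [h2] at h1; rw [h4] at h3
    omega
  have hT : T.card = b + d + f + g := by
    have h1 : (T ∩ (S ∪ U)).card + (T \ (S ∪ U)).card = T.card :=
      Finset.card_inter_add_card_sdiff T (S ∪ U)
    have h2 : T ∩ (S ∪ U) = (S ∩ T) ∪ (T ∩ U) := by
      ext x; simp only [Finset.mem_inter, Finset.mem_union]; tauto
    have h3 : ((S ∩ T) ∪ (T ∩ U)).card + ((S ∩ T) ∩ (T ∩ U)).card = (S ∩ T).card + (T ∩ U).card :=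
      Finset.card_union_add_card_inter _ _
    have h4 : (S ∩ T) ∩ (T ∩ U) = S ∩ T ∩ U := by
      ext x; simp only [Finset.mem_inter]; tauto
    rw [h2] at h1; rw [h4] at h3
    omega
  refine ⟨hst, ?_⟩
  have h5 : (S ∪ T).card + (S ∩ T).card = S.card + T.card := Finset.card_union_add_card_inter S T
  omega

/-- The Jaccard distance is a metric on the collection of finite subsets of a given type:
it is nonnegative, zero exactly when `S = T`, symmetric, and satisfies the triangle
inequality. -/
theorem jaccardDist_is_metric {α : Type*} [DecidableEq α] :
    (∀ S T : Finset α, 0 ≤ jaccardDist S T) ∧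
    (∀ S T : Finset α, jaccardDist S T = 0 ↔ S = T) ∧
    (∀ S T : Finset α, jaccardDist S T = jaccardDist T S) ∧
    (∀ S T U : Finset α, jaccardDist S U ≤ jaccardDist S T + jaccardDist T U) := by
  refine ⟨jaccardDist_nonneg', ?_, ?_, ?_⟩
  · -- zero iff equal
    intro S T
    by_cases h : S ∪ T = ∅
    · obtain ⟨h1, h2⟩ := Finset.union_eq_empty.mp h
      subst h1; subst h2
      simp [jaccardDist]
    · simp only [jaccardDist, if_neg h]
      have hpos : 0 < ((S ∪ T).card : ℝ) := by
        exact_mod_cast Finset.card_pos.mpr (Finset.nonempty_of_ne_empty h)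
      constructor
      · intro h0
        have hdiv : ((S ∩ T).card : ℝ) / ((S ∪ T).card : ℝ) = 1 := by linarith
        field_simp at hdiv
        have hc : (S ∪ T).card ≤ (S ∩ T).card := by exact_mod_cast hdiv.ge
        have heq : S ∩ T = S ∪ T :=
          Finset.eq_of_subset_of_card_le Finset.inter_subset_union hc
        apply Finset.Subset.antisymm
        · intro x hx
          have : x ∈ S ∩ T := heq ▸ (Finset.mem_union_left T hx)
          exact (Finset.mem_inter.mp this).2
        · intro x hx
          have : x ∈ S ∩ T := heq ▸ (Finset.mem_union_right S hx)
          exact (Finset.mem_inter.mp this).1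
      · intro heq
        subst heq
        rw [Finset.inter_self, Finset.union_self] at *
        field_simp
        norm_num
  · -- symmetry
    intro S T
    simp [jaccardDist, Finset.union_comm, Finset.inter_comm]
  · -- triangle inequality
    intro S T U
    by_cases hSU : S ∪ U = ∅
    · simp only [jaccardDist, if_pos hSU]
      exact add_nonneg (jaccardDist_nonneg' S T) (jaccardDist_nonneg' T U)
    by_cases hST : S ∪ T = ∅
    · obtain ⟨h1, h2⟩ := Finset.union_eq_empty.mp hST
      subst h1; subst h2
      simp [jaccardDist]
    by_cases hTU : T ∪ U = ∅
    · obtain ⟨h1, h2⟩ := Finset.union_eq_empty.mp hTU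
      subst h1; subst h2
      simp [jaccardDist]
    simp only [jaccardDist, if_neg hSU, if_neg hST, if_neg hTU]
    obtain ⟨ist, ust⟩ := jaccard_regions S T U
    obtain ⟨isu, usu⟩ := jaccard_regions S U T
    obtain ⟨itu, utu⟩ := jaccard_regions T U S
    set a := (S \ (T ∪ U)).card with ha
    set b := (T \ (S ∪ U)).card with hb
    set c := (U \ (S ∪ T)).card with hc
    set d := ((S ∩ T) \ U).card with hd
    set e := ((S ∩ U) \ T).card with he
    set f := ((T ∩ U) \ S).card with hf
    set g := (S ∩ T ∩ U).card with hg
    -- align region names appearing in the three instances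
    have r1 : ((S ∩ U) \ T).card = e := rfl
    have r2 : (S ∩ U ∩ T).card = g := by
      have : S ∩ U ∩ T = S ∩ T ∩ U := by ext x; simp only [Finset.mem_inter]; tauto
      rw [this]
    have r3 : (U \ (S ∪ T)).card = c := rfl
    have r4 : (T ∩ U ∩ S).card = g := by
      have : T ∩ U ∩ S = S ∩ T ∩ U := by ext x; simp only [Finset.mem_inter]; tauto
      rw [this]
    have r5 : (U \ (T ∪ S)).card = c := by rw [Finset.union_comm T S]
    have r6 : (S \ (U ∪ T)).card = a := by rw [Finset.union_comm U T]
    have r7 : (T \ (U ∪ S)).card = b := by rw [Finset.union_comm U S]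
    have r8 : ((U ∩ T) \ S).card = f := by rw [Finset.inter_comm U T]
    have r9 : ((U ∩ S) \ T).card = e := by rw [Finset.inter_comm U S]
    have r10 : ((T ∩ S) \ U).card = d := by rw [Finset.inter_comm T S]
    rw [r2] at isu
    rw [r2, r6, r8] at usu
    rw [r4] at itu
    rw [r4, r5, r7, r9, r10] at utu
    -- cast to ℝ and apply the real lemma
    have hSTpos : 0 < (S ∪ T).card := Finset.card_pos.mpr (Finset.nonempty_of_ne_empty hST)
    have hSUpos : 0 < (S ∪ U).card := Finset.card_pos.mpr (Finset.nonempty_of_ne_empty hSU)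
    have hTUpos : 0 < (T ∪ U).card := Finset.card_pos.mpr (Finset.nonempty_of_ne_empty hTU)
    rw [ist, ust, isu, usu, itu, utu]
    rw [ust] at hSTpos
    rw [usu] at hSUpos
    rw [utu] at hTUpos
    push_cast
    have hra : (0:ℝ) ≤ a := Nat.cast_nonneg a
    have hrb : (0:ℝ) ≤ b := Nat.cast_nonneg b
    have hrc : (0:ℝ) ≤ c := Nat.cast_nonneg c
    have hrd : (0:ℝ) ≤ d := Nat.cast_nonneg d
    have hre : (0:ℝ) ≤ e := Nat.cast_nonneg e
    have hrf : (0:ℝ) ≤ f := Nat.cast_nonneg f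
    have hrg : (0:ℝ) ≤ g := Nat.cast_nonneg g
    have p1 : (0:ℝ) < a + c + d + e + f + g := by
      exact_mod_cast (show 0 < a + c + d + e + f + g by omega)
    have p2 : (0:ℝ) < a + b + d + e + f + g := by exact_mod_cast hSTpos
    have p3 : (0:ℝ) < b + c + d + e + f + g := by
      exact_mod_cast (show 0 < b + c + d + e + f + g by omega)
    have := jaccard_tri_real a b c d e f g hra hrb hrc hrd hre hrf hrg p1 p2 p3
    convert this using 3 <;> push_cast <;> ring
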